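/- The map Θ sending a complex symmetric matrix N = R + iI with I positive definite to the matrix J = [[I^{-1}R, I^{-1}], [-I - R I^{-1} R, -R I^{-1}]] is a bijection from the Siegel upper half space SH_n onto the set of tamings of the standard symplectic form ω_{2n} on ℝ^{2n}. -/

import Mathlib

open Matrix

/-- The matrix of the standard symplectic form on `ℝ^{2n}`: `Ω = [[0,1],[-1,0]]`. -/
def OmegaMat (n : ℕ) : Matrix (Fin n ⊕ Fin n) (Fin n ⊕ Fin n) ℝ :=
  Matrix.fromBlocks 0 1 (-1) 0

/-- Real part of a complex matrix. -/
def rePart (n : ℕ) (N : Matrix (Fin n) (Fin n) ℂ) : Matrix (Fin n) (Fin n) ℝ :=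
  fun i j => (N i j).re

/-- Imaginary part of a complex matrix. -/
def imPart (n : ℕ) (N : Matrix (Fin n) (Fin n) ℂ) : Matrix (Fin n) (Fin n) ℝ :=
  fun i j => (N i j).im

/-- The map `Θ` from the Siegel upper half space to `2n × 2n` real matrices,
`N = R + iI ↦ [[I⁻¹R, I⁻¹], [-I - R I⁻¹ R, -R I⁻¹]]`. -/
noncomputable def Theta (n : ℕ) (N : Matrix (Fin n) (Fin n) ℂ) :
    Matrix (Fin n ⊕ Fin n) (Fin n ⊕ Fin n) ℝ :=
  Matrix.fromBlocks ((imPart n N)⁻¹ * rePart n N) (imPart n N)⁻¹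
    (-(imPart n N) - rePart n N * (imPart n N)⁻¹ * rePart n N)
    (-(rePart n N * (imPart n N)⁻¹))

/-- `J` is a taming of the standard symplectic form `ω_{2n}`: `J² = -1`, `J` is
symplectic, and `ω(J·,·)` (with matrix `Jᵀ Ω`) is symmetric positive definite. -/
def IsTaming (n : ℕ) (J : Matrix (Fin n ⊕ Fin n) (Fin n ⊕ Fin n) ℝ) : Prop :=
  J * J = -1 ∧ Jᵀ * OmegaMat n * J = OmegaMat n ∧ (Jᵀ * OmegaMat n).PosDef

/-!
Write a real `2n × 2n` matrix as `J = [[A, B], [C, D]]`. The Gram matrix of `ω(J·,·)` is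
`Jᵀ Ω = [[-Cᵀ, Aᵀ], [-Dᵀ, Bᵀ]]`; if it is symmetric positive definite then `D = -Aᵀ` and `B` is
symmetric positive definite, and `J² = -1` reads `A² + BC = -1`, `AB = BAᵀ`. Hence a taming is
`Θ(R + iI)` for exactly one pair: `I = B⁻¹`, `R = B⁻¹A`. Conversely, for `J = Θ(R + iI)` the
Schur complement of the block `I⁻¹` in `Jᵀ Ω` is `I` itself, which gives positivity, and
`Jᵀ Ω J = Ω` follows from `J² = -1` and the symmetry of `Jᵀ Ω`.
-/

namespace Matrix

variable {m 𝕜 K : Type*}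

theorem PosDef.isSymm {R : Type*} [Ring R] [PartialOrder R] [StarRing R] [TrivialStar R]
    {A : Matrix m m R} (hA : A.PosDef) : A.IsSymm :=
  isHermitian_iff_isSymm.mp hA.isHermitian

variable [Fintype m] [DecidableEq m]

open scoped ComplexOrder in
theorem PosDef.fromBlocks_of_posDef_schur₂₂ [RCLike 𝕜] {A B D : Matrix m m 𝕜} (hD : D.PosDef)
    (hS : (A - B * D⁻¹ * Bᴴ).PosDef) : (fromBlocks A B Bᴴ D).PosDef := by
  have := hD.isUnit.invertible
  refine ((hD.fromBlocks₂₂ A B).mpr hS.posSemidef).posDef_iff_det_ne_zero.mpr ?_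
  rw [det_fromBlocks₂₂, invOf_eq_nonsing_inv]
  exact mul_ne_zero hD.det_pos.ne' hS.det_pos.ne'

variable [CommRing K]

theorem fromBlocks_transpose_mul_symplectic (A B C D : Matrix m m K) :
    (fromBlocks A B C D)ᵀ * fromBlocks 0 1 (-1) 0 = fromBlocks (-Cᵀ) Aᵀ (-Dᵀ) Bᵀ := by
  simp [fromBlocks_transpose, fromBlocks_multiply]

theorem isSymm_inv_mul {A B : Matrix m m K} [Invertible B] (hB : B.IsSymm)
    (hAB : A * B = B * Aᵀ) : (B⁻¹ * A).IsSymm := by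
  rw [IsSymm, transpose_mul, transpose_nonsing_inv, hB.eq]
  calc Aᵀ * B⁻¹ = B⁻¹ * (B * Aᵀ) * B⁻¹ := by rw [inv_mul_cancel_left_of_invertible]
    _ = B⁻¹ * A := by rw [← hAB, Matrix.mul_assoc, mul_inv_cancel_right_of_invertible]

/-- `Theta n N` is by definition `thetaReIm (rePart n N) (imPart n N)`. -/
noncomputable def thetaReIm (R I : Matrix m m K) : Matrix (m ⊕ m) (m ⊕ m) K :=
  fromBlocks (I⁻¹ * R) I⁻¹ (-I - R * I⁻¹ * R) (-(R * I⁻¹))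

theorem thetaReIm_mul_self (R I : Matrix m m K) [Invertible I] :
    thetaReIm R I * thetaReIm R I = -1 := by
  rw [thetaReIm, fromBlocks_multiply, ← fromBlocks_one, fromBlocks_neg, neg_zero]
  congr 1 <;>
  · simp only [Matrix.mul_assoc, mul_sub, sub_mul, mul_neg, neg_mul, inv_mul_of_invertible,
      mul_inv_of_invertible, mul_inv_cancel_left_of_invertible, Matrix.mul_one]
    abel

theorem thetaReIm_transpose_mul_symplectic {R I : Matrix m m K} (hR : R.IsSymm) (hI : I.IsSymm) :
    (thetaReIm R I)ᵀ * fromBlocks 0 1 (-1) 0 =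
      fromBlocks (I + R * I⁻¹ * R) (R * I⁻¹) (I⁻¹ * R) I⁻¹ := by
  have hI' : I⁻¹ᵀ = I⁻¹ := by rw [transpose_nonsing_inv, hI.eq]
  rw [thetaReIm, fromBlocks_transpose_mul_symplectic]
  simp [transpose_mul, hR.eq, hI.eq, hI', Matrix.mul_assoc, add_comm]

theorem eq_and_eq_of_thetaReIm_eq {R R' I I' : Matrix m m K} (hI : IsUnit I)
    (h : thetaReIm R I = thetaReIm R' I') : R = R' ∧ I = I' := by
  have hinv : I⁻¹ = I'⁻¹ := congrArg toBlocks₁₂ h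
  obtain rfl : I = I' := inv_inj hinv ((isUnit_iff_isUnit_det I).mp hI)
  have := hI.invertible
  have hR : I⁻¹ * R = I⁻¹ * R' := congrArg toBlocks₁₁ h
  exact ⟨((inv_mul_eq_iff_eq_mul_of_invertible I R _).mp hR).trans
    (mul_inv_cancel_left_of_invertible I R'), rfl⟩

theorem thetaReIm_inv_mul_inv {A B C : Matrix m m K} [Invertible B]
    (hC : A * A + B * C = -1) (hAB : A * B = B * Aᵀ) :
    thetaReIm (B⁻¹ * A) B⁻¹ = fromBlocks A B C (-Aᵀ) := by
  have hBC : B⁻¹ * (-1 - A * A) = C := by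
    rw [← hC, add_sub_cancel_left, inv_mul_cancel_left_of_invertible]
  rw [thetaReIm, inv_inv_of_invertible, mul_inv_cancel_left_of_invertible]
  congr 1
  · rw [← hBC, Matrix.mul_assoc (B⁻¹ * A), mul_inv_cancel_left_of_invertible, mul_sub, mul_neg,
      Matrix.mul_one, Matrix.mul_assoc]
  · rw [Matrix.mul_assoc, hAB, inv_mul_cancel_left_of_invertible]

end Matrix

theorem omegaMat_transpose (n : ℕ) : (OmegaMat n)ᵀ = -OmegaMat n := by
  simp [OmegaMat, fromBlocks_transpose, fromBlocks_neg]

theorem isTaming_of_mul_self_of_posDef {n : ℕ} {J : Matrix (Fin n ⊕ Fin n) (Fin n ⊕ Fin n) ℝ}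
    (hJ : J * J = -1) (hpos : (Jᵀ * OmegaMat n).PosDef) : IsTaming n J := by
  refine ⟨hJ, ?_, hpos⟩
  have hsymm : (Jᵀ * OmegaMat n)ᵀ = Jᵀ * OmegaMat n := hpos.isSymm
  rw [← hsymm, transpose_mul, omegaMat_transpose, transpose_transpose, Matrix.mul_assoc, hJ]
  simp

theorem isTaming_thetaReIm {n : ℕ} {R I : Matrix (Fin n) (Fin n) ℝ} (hR : R.IsSymm)
    (hI : I.PosDef) : IsTaming n (thetaReIm R I) := by
  have := hI.isUnit.invertible
  have hIs : I.IsSymm := hI.isSymm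
  have hB : (R * I⁻¹)ᴴ = I⁻¹ * R := by
    rw [conjTranspose_eq_transpose_of_trivial, transpose_mul, transpose_nonsing_inv, hIs.eq, hR.eq]
  refine isTaming_of_mul_self_of_posDef (thetaReIm_mul_self R I) ?_
  rw [OmegaMat, thetaReIm_transpose_mul_symplectic hR hIs, ← hB]
  refine hI.inv.fromBlocks_of_posDef_schur₂₂ ?_
  rwa [inv_inv_of_invertible, hB, inv_mul_cancel_right_of_invertible, ← Matrix.mul_assoc,
    add_sub_cancel_right]

theorem IsTaming.exists_thetaReIm_eq {n : ℕ} {J : Matrix (Fin n ⊕ Fin n) (Fin n ⊕ Fin n) ℝ}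
    (hJ : IsTaming n J) : ∃ R I, R.IsSymm ∧ I.PosDef ∧ thetaReIm R I = J := by
  obtain ⟨hsq, -, hpos⟩ := hJ
  obtain ⟨A, B, C, D, rfl⟩ : ∃ A B C D, J = fromBlocks A B C D :=
    ⟨_, _, _, _, (fromBlocks_toBlocks J).symm⟩
  rw [OmegaMat, fromBlocks_transpose_mul_symplectic] at hpos
  obtain ⟨-, hAD, -, -⟩ := isHermitian_fromBlocks_iff.mp hpos.isHermitian
  have hBt : Bᵀ.PosDef := hpos.submatrix Sum.inr_injective
  have hBs : B.IsSymm := isSymm_transpose_iff.mp hBt.isSymm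
  have hB : B.PosDef := hBs.eq ▸ hBt
  obtain rfl : D = -Aᵀ := by
    simpa [neg_eq_iff_eq_neg] using (congrArg transpose hAD).symm
  have := hB.isUnit.invertible
  rw [fromBlocks_multiply, ← fromBlocks_one, fromBlocks_neg, neg_zero, fromBlocks_inj] at hsq
  obtain ⟨hC, hAB, -, -⟩ := hsq
  rw [mul_neg, ← sub_eq_add_neg, sub_eq_zero] at hAB
  exact ⟨B⁻¹ * A, B⁻¹, isSymm_inv_mul hBs hAB, hB.inv, thetaReIm_inv_mul_inv hC hAB⟩

namespace Matrix

def ofReIm {m : Type*} (R I : Matrix m m ℝ) : Matrix m m ℂ :=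
  of fun i j => ⟨R i j, I i j⟩

theorem isSymm_ofReIm {m : Type*} {R I : Matrix m m ℝ} (hR : R.IsSymm) (hI : I.IsSymm) :
    (ofReIm R I).IsSymm := by
  ext i j
  exact Complex.ext (congrFun₂ hR i j) (congrFun₂ hI i j)

theorem IsSymm.rePart {n : ℕ} {N : Matrix (Fin n) (Fin n) ℂ} (hN : N.IsSymm) :
    (rePart n N).IsSymm := by
  ext i j
  exact congrArg Complex.re (congrFun₂ hN i j)

theorem ofReIm_rePart_imPart (n : ℕ) (N : Matrix (Fin n) (Fin n) ℂ) :
    ofReIm (rePart n N) (imPart n N) = N :=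
  rfl

end Matrix

/-- `Θ` is a bijection from the Siegel upper half space `SH_n` (complex symmetric `n×n`
matrices with positive definite imaginary part) onto the set of tamings of the standard
symplectic form `ω_{2n}` on `ℝ^{2n}`. -/
theorem theta_bijection_siegel_tamings (n : ℕ) :
    (∀ N : Matrix (Fin n) (Fin n) ℂ,
      N.IsSymm → (imPart n N).PosDef → IsTaming n (Theta n N)) ∧
    (∀ J : Matrix (Fin n ⊕ Fin n) (Fin n ⊕ Fin n) ℝ, IsTaming n J →
      ∃! N : Matrix (Fin n) (Fin n) ℂ,
        (N.IsSymm ∧ (imPart n N).PosDef) ∧ Theta n N = J) := by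
  refine ⟨fun N hN hI => isTaming_thetaReIm hN.rePart hI, fun J hJ => ?_⟩
  obtain ⟨R, I, hR, hI, rfl⟩ := hJ.exists_thetaReIm_eq
  refine ⟨ofReIm R I, ⟨⟨isSymm_ofReIm hR hI.isSymm, hI⟩, rfl⟩, ?_⟩
  rintro N ⟨⟨-, hN⟩, hNJ⟩
  obtain ⟨rfl, rfl⟩ := eq_and_eq_of_thetaReIm_eq hN.isUnit hNJ
  exact (ofReIm_rePart_imPart n N).symm
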